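/- Let n ≥ 1 and d ≥ 2 be integers, let μ_d ⊂ C be the set of d-th roots of unity, and let F = ∏_{(ε_1,...,ε_n) ∈ μ_d^n} (x_1 + ε_1 x_2 + ... + ε_n x_{n+1}) in C[x_1,...,x_{n+1}]. Then (x_1 + x_2 + ... + x_{n+1}) divides F, the quotient G = F/(x_1 + ... + x_{n+1}) is a nonzero homogeneous polynomial of degree d^n − 1 which does not lie in the ideal J = (x_1^d,...,x_{n+1}^d)^{d^{n−1}}, and (x_1 + ... + x_{n+1})·G lies in J. Consequently, multiplication by the linear form x_1 + ... + x_{n+1} on the graded ring C[x_1,...,x_{n+1}]/J is not injective in degree d^n − 1. -/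

import Mathlib

/-!
Rescaling `x_{k+1}` by a primitive `d`-th root of unity permutes the factors of `F`, so `F` is
invariant and every exponent of `x_2, …, x_{n+1}` occurring in `F` is divisible by `d`; as `F` is
homogeneous of degree `d^n`, so is the exponent of `x_1`. Hence each monomial of `F` is a product
of `d^(n-1)` of the generators `x_i^d`, and `F ∈ J`. The factor of `F` at `ε = 1` is
`x_1 + ⋯ + x_{n+1}`; the cofactor `G` is nonzero and homogeneous of degree `d^n - 1`, which is
below the degree `d · d^(n-1)` of every monomial of an element of `J`, so `G ∉ J`.
-/

open MvPolynomial

/-- The degree-`i` homogeneous component of the quotient `ℂ[x_1,…,x_n]/J`,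
realized as the image of the space of homogeneous polynomials of degree `i`. -/
noncomputable def quotComp {n : ℕ} (J : Ideal (MvPolynomial (Fin n) ℂ)) (i : ℕ) :
    Submodule ℂ (MvPolynomial (Fin n) ℂ ⧸ J) :=
  Submodule.map (Ideal.Quotient.mkₐ ℂ J).toLinearMap (homogeneousSubmodule (Fin n) ℂ i)

lemma Polynomial.inv_mem_nthRootsFinset {K : Type*} [Field K] {d : ℕ} {x : K}
    (hx : x ∈ Polynomial.nthRootsFinset d (1 : K)) : x⁻¹ ∈ Polynomial.nthRootsFinset d (1 : K) := by
  rcases d.eq_zero_or_pos with rfl | hd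
  · simp at hx
  · rw [Polynomial.mem_nthRootsFinset hd] at hx ⊢
    rw [inv_pow, hx, inv_one]

namespace MvPolynomial

lemma IsHomogeneous.degree_eq_of_mem_support {σ R : Type*} [CommSemiring R]
    {p : MvPolynomial σ R} {n : ℕ} (hp : p.IsHomogeneous n) {s : σ →₀ ℕ} (hs : s ∈ p.support) :
    s.degree = n := by
  rw [Finsupp.degree_eq_weight_one]
  exact hp (mem_support_iff.mp hs)

section VarPowIdeal

variable (σ R : Type*) [CommSemiring R]

noncomputable abbrev varPowIdeal (d : ℕ) : Ideal (MvPolynomial σ R) :=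
  .span (.range fun i => X i ^ d)

variable {σ R}

lemma varPowIdeal_pow_le (d m : ℕ) : varPowIdeal σ R d ^ m ≤ idealOfVars σ R ^ (d * m) := by
  rw [pow_mul]
  refine Ideal.pow_right_mono ?_ m
  rw [Ideal.span_le, Set.range_subset_iff]
  exact fun i => Ideal.pow_mem_pow (Ideal.subset_span (Set.mem_range_self i)) d

lemma notMem_varPowIdeal_pow {d m k : ℕ} {p : MvPolynomial σ R} (hp : p ≠ 0)
    (hhom : p.IsHomogeneous k) (hk : k < d * m) : p ∉ varPowIdeal σ R d ^ m := by
  intro hmem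
  obtain ⟨s, hs⟩ := support_nonempty.mpr hp
  have := (mem_pow_idealOfVars_iff _ p).mp (varPowIdeal_pow_le d m hmem) s hs
  rw [hhom.degree_eq_of_mem_support hs] at this
  omega

lemma monomial_mem_varPowIdeal_pow {d : ℕ} {s : σ →₀ ℕ} (hs : ∀ i, d ∣ s i) (c : R) :
    monomial s c ∈ varPowIdeal σ R d ^ ∑ i ∈ s.support, s i / d := by
  have hprod : monomial s c = C c * ∏ i ∈ s.support, (X i ^ d) ^ (s i / d) := by
    rw [monomial_eq, Finsupp.prod]
    congr 1
    refine Finset.prod_congr rfl fun i _ => ?_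
    rw [← pow_mul, Nat.mul_div_cancel' (hs i)]
  rw [hprod, ← Finset.prod_pow_eq_pow_sum]
  exact Ideal.mul_mem_left _ _ (Ideal.prod_mem_prod fun i _ =>
    Ideal.pow_mem_pow (Ideal.subset_span (Set.mem_range_self i)) _)

lemma mem_varPowIdeal_pow_of_dvd {d m : ℕ} (hd : 0 < d) {p : MvPolynomial σ R}
    (hhom : p.IsHomogeneous (d * m)) (hdvd : ∀ s ∈ p.support, ∀ i, d ∣ s i) :
    p ∈ varPowIdeal σ R d ^ m := by
  rw [p.as_sum]
  refine Ideal.sum_mem _ fun s hs => ?_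
  have hsum : ∑ i ∈ s.support, s i / d = m := by
    refine Nat.eq_of_mul_eq_mul_left hd ?_
    rw [Finset.mul_sum, ← hhom.degree_eq_of_mem_support hs, Finsupp.degree]
    exact Finset.sum_congr rfl fun i _ => Nat.mul_div_cancel' (hdvd s hs i)
  exact hsum ▸ monomial_mem_varPowIdeal_pow (hdvd s hs) _

end VarPowIdeal

lemma coeff_aeval_C_mul_X {σ R : Type*} [CommSemiring R] (c : σ → R) (p : MvPolynomial σ R)
    (s : σ →₀ ℕ) :
    coeff s (aeval (fun i => C (c i) * X i) p) = (s.prod fun i e => c i ^ e) * coeff s p := by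
  induction p using MvPolynomial.induction_on' with
  | monomial t a =>
    classical
    simp only [aeval_monomial, mul_pow, Finsupp.prod_mul, ← map_pow]
    rw [← map_finsuppProd, algebraMap_eq, ← mul_assoc, ← map_mul, ← monomial_eq, coeff_monomial,
      coeff_monomial]
    split_ifs with h
    · subst h; ring
    · simp
  | add p q hp hq => simp only [map_add, coeff_add, hp, hq, mul_add]

lemma dvd_of_aeval_mulSingle_eq {σ K : Type*} [DecidableEq σ] [CommRing K] [IsDomain K]
    {ζ : K} {d : ℕ} (hζ : IsPrimitiveRoot ζ d) {j : σ} {p : MvPolynomial σ K}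
    (hp : aeval (fun i => C ((Pi.mulSingle j ζ : σ → K) i) * X i) p = p) {s : σ →₀ ℕ}
    (hs : s ∈ p.support) : d ∣ s j := by
  have hprod : (s.prod fun i e => (Pi.mulSingle j ζ : σ → K) i ^ e) = ζ ^ s j := by
    rw [Finsupp.prod, Finset.prod_eq_single j (fun i _ hij => by simp [hij])
      (fun hj => by simp [Finsupp.notMem_support_iff.mp hj]), Pi.mulSingle_eq_same]
  have hcoeff := coeff_aeval_C_mul_X (Pi.mulSingle j ζ) p s
  rw [hp, hprod, eq_comm, mul_eq_right₀ (mem_support_iff.mp hs)] at hcoeff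
  exact (hζ.pow_eq_one_iff_dvd _).mp hcoeff

section TwistedSum

variable {R : Type*} [CommSemiring R] {n : ℕ}

-- The linear form `x_1 + ε_1 x_2 + ⋯ + ε_n x_{n+1}`, with the variables indexed from `0`.
noncomputable def twistedSum (ε : Fin n → R) : MvPolynomial (Fin (n + 1)) R :=
  X 0 + ∑ i, C (ε i) * X i.succ

lemma isHomogeneous_twistedSum (ε : Fin n → R) : (twistedSum ε).IsHomogeneous 1 :=
  (isHomogeneous_X _ _).add (IsHomogeneous.sum _ _ _ fun _ _ => isHomogeneous_C_mul_X _ _)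

lemma twistedSum_one : twistedSum (1 : Fin n → R) = ∑ i, X i := by
  simp [twistedSum, Fin.sum_univ_succ]

lemma eval_single_zero_twistedSum (ε : Fin n → R) :
    eval (Pi.single 0 1) (twistedSum ε) = 1 := by
  simp [twistedSum, Fin.succ_ne_zero]

lemma aeval_C_mul_X_twistedSum {c : Fin (n + 1) → R} (hc : c 0 = 1) (ε : Fin n → R) :
    aeval (fun i => C (c i) * X i) (twistedSum ε) = twistedSum fun i => ε i * c i.succ := by
  simp [twistedSum, hc, mul_comm, mul_left_comm]

end TwistedSum

section TwistedProduct

variable (K : Type*) [Field K] (d n : ℕ)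

noncomputable def rootTuples : Finset (Fin n → K) :=
  Fintype.piFinset fun _ => Polynomial.nthRootsFinset d (1 : K)

noncomputable def twistedProduct : MvPolynomial (Fin (n + 1)) K :=
  ∏ ε ∈ rootTuples K d n, twistedSum ε

open Classical in
noncomputable def twistedCofactor : MvPolynomial (Fin (n + 1)) K :=
  ∏ ε ∈ (rootTuples K d n).erase 1, twistedSum ε

variable {K d n}

lemma card_rootTuples {ζ : K} (hζ : IsPrimitiveRoot ζ d) : (rootTuples K d n).card = d ^ n := by
  simp [rootTuples, hζ.card_nthRootsFinset]

lemma one_mem_rootTuples (hd : 0 < d) : 1 ∈ rootTuples K d n :=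
  Fintype.mem_piFinset.mpr fun _ => Polynomial.one_mem_nthRootsFinset hd

lemma twistedProduct_eq_sum_X_mul_twistedCofactor (hd : 0 < d) :
    twistedProduct K d n = (∑ i, X i) * twistedCofactor K d n := by
  classical
  rw [twistedProduct, twistedCofactor, ← Finset.mul_prod_erase _ _ (one_mem_rootTuples hd),
    twistedSum_one]

lemma isHomogeneous_twistedProduct {ζ : K} (hζ : IsPrimitiveRoot ζ d) :
    (twistedProduct K d n).IsHomogeneous (d ^ n) := by
  simpa [twistedProduct, card_rootTuples hζ] using
    IsHomogeneous.prod _ _ _ fun ε (_ : ε ∈ rootTuples K d n) => isHomogeneous_twistedSum ε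

lemma isHomogeneous_twistedCofactor {ζ : K} (hζ : IsPrimitiveRoot ζ d) (hd : 0 < d) :
    (twistedCofactor K d n).IsHomogeneous (d ^ n - 1) := by
  classical
  simpa [twistedCofactor, Finset.card_erase_of_mem (one_mem_rootTuples hd),
    card_rootTuples hζ] using
    IsHomogeneous.prod _ _ _ fun ε (_ : ε ∈ (rootTuples K d n).erase 1) =>
      isHomogeneous_twistedSum ε

lemma twistedCofactor_ne_zero : twistedCofactor K d n ≠ 0 := by
  intro h
  have := congrArg (eval (Pi.single 0 1)) h
  simp [twistedCofactor, map_prod, eval_single_zero_twistedSum] at this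

lemma aeval_C_mul_X_twistedProduct {c : Fin (n + 1) → K} (hc0 : c 0 = 1)
    (hc : ∀ i : Fin n, c i.succ ∈ Polynomial.nthRootsFinset d (1 : K)) :
    aeval (fun i => C (c i) * X i) (twistedProduct K d n) = twistedProduct K d n := by
  have hne : ∀ i : Fin n, c i.succ ≠ 0 := fun i =>
    Polynomial.ne_zero_of_mem_nthRootsFinset one_ne_zero (hc i)
  rw [twistedProduct, map_prod]
  refine Finset.prod_nbij' (fun ε i => ε i * c i.succ) (fun ε i => ε i * (c i.succ)⁻¹)
    (fun ε hε => ?_) (fun ε hε => ?_) (fun ε _ => ?_) (fun ε _ => ?_)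
    (fun ε _ => aeval_C_mul_X_twistedSum hc0 ε)
  · simp only [rootTuples, Fintype.mem_piFinset] at hε ⊢
    exact fun i => mul_one (1 : K) ▸ Polynomial.mul_mem_nthRootsFinset (hε i) (hc i)
  · simp only [rootTuples, Fintype.mem_piFinset] at hε ⊢
    exact fun i => mul_one (1 : K) ▸
      Polynomial.mul_mem_nthRootsFinset (hε i) (Polynomial.inv_mem_nthRootsFinset (hc i))
  · funext i
    simp [hne i]
  · funext i
    simp [hne i]

lemma dvd_of_mem_support_twistedProduct {ζ : K} (hζ : IsPrimitiveRoot ζ d) (hd : 0 < d)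
    (hn : 1 ≤ n) {s : Fin (n + 1) →₀ ℕ} (hs : s ∈ (twistedProduct K d n).support)
    (j : Fin (n + 1)) : d ∣ s j := by
  have hsucc : ∀ k : Fin n, d ∣ s k.succ := by
    intro k
    refine dvd_of_aeval_mulSingle_eq hζ (aeval_C_mul_X_twistedProduct ?_ fun i => ?_) hs
    · exact Pi.mulSingle_eq_of_ne (Fin.succ_ne_zero k).symm ζ
    · rw [Pi.mulSingle_apply]
      split_ifs
      · exact hζ.mem_nthRootsFinset hd
      · exact Polynomial.one_mem_nthRootsFinset hd
  induction j using Fin.cases with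
  | zero =>
    have hdeg := (isHomogeneous_twistedProduct hζ).degree_eq_of_mem_support hs
    rw [Finsupp.degree_eq_sum, Fin.sum_univ_succ] at hdeg
    exact (Nat.dvd_add_left (Finset.dvd_sum fun k _ => hsucc k)).mp
      (hdeg ▸ dvd_pow_self d (by omega))
  | succ k => exact hsucc k

lemma twistedProduct_mem_varPowIdeal_pow {ζ : K} (hζ : IsPrimitiveRoot ζ d) (hd : 0 < d)
    (hn : 1 ≤ n) :
    twistedProduct K d n ∈ varPowIdeal (Fin (n + 1)) K d ^ d ^ (n - 1) := by
  have hdn : d * d ^ (n - 1) = d ^ n := by rw [← pow_succ']; congr 1; omega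
  refine mem_varPowIdeal_pow_of_dvd hd ?_ fun s hs =>
    dvd_of_mem_support_twistedProduct hζ hd hn hs
  exact hdn ▸ isHomogeneous_twistedProduct hζ

end TwistedProduct

end MvPolynomial

theorem stmt_5 (n d : ℕ) (hn : 1 ≤ n) (hd : 2 ≤ d) :
    ∃ G : MvPolynomial (Fin (n + 1)) ℂ,
      (∏ ε ∈ Fintype.piFinset (fun _ : Fin n => Polynomial.nthRootsFinset d (1 : ℂ)),
          ((X 0 : MvPolynomial (Fin (n + 1)) ℂ) + ∑ i : Fin n, C (ε i) * X i.succ))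
        = (∑ i : Fin (n + 1), X i) * G ∧
      G ≠ 0 ∧ G.IsHomogeneous (d ^ n - 1) ∧
      G ∉ (Ideal.span (Set.range fun i : Fin (n + 1) =>
            (X i : MvPolynomial (Fin (n + 1)) ℂ) ^ d)) ^ (d ^ (n - 1)) ∧
      (∑ i : Fin (n + 1), (X i : MvPolynomial (Fin (n + 1)) ℂ)) * G
        ∈ (Ideal.span (Set.range fun i : Fin (n + 1) =>
            (X i : MvPolynomial (Fin (n + 1)) ℂ) ^ d)) ^ (d ^ (n - 1)) ∧
      ¬ (∀ x ∈ quotComp ((Ideal.span (Set.range fun i : Fin (n + 1) =>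
              (X i : MvPolynomial (Fin (n + 1)) ℂ) ^ d)) ^ (d ^ (n - 1))) (d ^ n - 1),
          Ideal.Quotient.mk _ (∑ i : Fin (n + 1), (X i : MvPolynomial (Fin (n + 1)) ℂ)) * x = 0
            → x = 0) := by
  have hd0 : 0 < d := by omega
  obtain ⟨ζ, hζ⟩ : ∃ ζ : ℂ, IsPrimitiveRoot ζ d := ⟨_, Complex.isPrimitiveRoot_exp d hd0.ne'⟩
  have hFG := twistedProduct_eq_sum_X_mul_twistedCofactor (K := ℂ) (n := n) hd0
  have hGhom := isHomogeneous_twistedCofactor (n := n) hζ hd0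
  have hdeg : d ^ n - 1 < d * d ^ (n - 1) := by
    rw [← pow_succ', Nat.sub_add_cancel hn]
    exact Nat.sub_lt (by positivity) one_pos
  have hGnot := notMem_varPowIdeal_pow twistedCofactor_ne_zero hGhom hdeg
  have hLG : (∑ i, X i) * twistedCofactor ℂ d n ∈ varPowIdeal (Fin (n + 1)) ℂ d ^ d ^ (n - 1) :=
    hFG ▸ twistedProduct_mem_varPowIdeal_pow hζ hd0 hn
  refine ⟨twistedCofactor ℂ d n, hFG, twistedCofactor_ne_zero, hGhom, hGnot, hLG,
    fun hinj => hGnot (Ideal.Quotient.eq_zero_iff_mem.mp (hinj _ ⟨_, hGhom, rfl⟩ ?_))⟩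
  rw [← map_mul]
  exact Ideal.Quotient.eq_zero_iff_mem.mpr hLG
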